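/- Let G be a D-regular Bonnet-Myers sharp graph of diameter L with pole x_0, and let x_1, x̄_1 ∈ S_1(x_0), x_2 ∈ S_2(x_0) with x_1 ~ x_2 ~ x̄_1 and x_1 not adjacent or equal to x̄_1. Let u ∈ S_1(x_0) with u ∉ {x_1, x̄_1}. Then u lies in the interval [x_0, x_2] if and only if u is adjacent to both x_1 and x̄_1. -/

import Mathlib

open Finset

namespace BMS

open scoped Classical

variable {V : Type*}

/-- The uniform probability measure on the closed 1-ball of `x` in a `D`-regular graph. -/
noncomputable def mu (G : SimpleGraph V) (D : ℕ) (x : V) : V → ℝ :=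
  fun v => if G.dist x v ≤ 1 then 1 / (D + 1) else 0

/-- The L¹-Wasserstein distance between `μ_x` and `μ_y`, as an infimum over transport plans. -/
noncomputable def W1 (G : SimpleGraph V) [Fintype V] (D : ℕ) (x y : V) : ℝ :=
  sInf { c : ℝ | ∃ π : V → V → ℝ,
    (∀ u v, 0 ≤ π u v) ∧
    (∀ u, ∑ v, π u v = mu G D x u) ∧
    (∀ v, ∑ u, π u v = mu G D y v) ∧
    c = ∑ u, ∑ v, (G.dist u v : ℝ) * π u v }

/-- Ollivier Ricci curvature (Lin–Lu–Yau normalization for regular graphs). -/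
noncomputable def kappa (G : SimpleGraph V) [Fintype V] (D : ℕ) (x y : V) : ℝ :=
  ((D + 1) / D) * (1 - W1 G D x y)

/-- `G` is Bonnet–Myers sharp: the infimum of the curvature over edges equals `2 / L`. -/
def BMSharp (G : SimpleGraph V) [Fintype V] (D L : ℕ) : Prop :=
  sInf { k : ℝ | ∃ x y, G.Adj x y ∧ k = kappa G D x y } = 2 / (L : ℝ)

/-- Number of neighbors of `y` at distance `k` from `x0`. -/
noncomputable def sphDeg (G : SimpleGraph V) [Fintype V] (x0 y : V) (k : ℕ) : ℕ :=
  (Finset.univ.filter (fun v => G.Adj y v ∧ G.dist x0 v = k)).card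

/-- Number of triangles containing the edge `x ~ y` (common neighbors of `x` and `y`). -/
noncomputable def tri (G : SimpleGraph V) [Fintype V] (x y : V) : ℕ :=
  (Finset.univ.filter (fun v => G.Adj x v ∧ G.Adj y v)).card

/-- A good optimal transport map from `B_1(a)` to `B_1(b)`: a bijection between the 1-balls,
fixing exactly the vertices of `B_1(a) ∩ B_1(b)` (among the domain), whose cost realizes
the Wasserstein distance `W1 (μ_a, μ_b)`. -/
def goodMap (G : SimpleGraph V) [Fintype V] (D : ℕ) (a b : V) (T : V → V) : Prop :=
  Set.BijOn T {v | G.dist a v ≤ 1} {v | G.dist b v ≤ 1} ∧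
  (∀ v, G.dist a v ≤ 1 → (T v = v ↔ G.dist b v ≤ 1)) ∧
  (1 / (D + 1 : ℝ)) *
      ∑ v ∈ Finset.univ.filter (fun v => G.dist a v ≤ 1), (G.dist v (T v) : ℝ) =
    W1 G D a b

/-!
Write `S_g(a)` for the sum of `g` over the closed neighbourhood `B₁(a)`. Weak Kantorovich duality
and `κ ≥ 2 / L` give `S_g(b) - S_g(a) ≤ D + 1 - 2D / L` for every 1-Lipschitz `g` and every edge
`ab`. Summed along a geodesic between `x₀` and a pole `p`, these inequalities are sharp for
`d(x₀, ·)` and for `d(p, ·)`. Hence the sum of `d(x₀, ·) + d(p, ·) ≥ L` over `B₁(v)` keeps its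
minimal value `(D + 1) L` along geodesic edges, so every vertex lies in `[x₀, p]` and every edge
from `S_k` to `S_{k+1}` is tight for `d(x₀, ·)`. Perturbing `d(x₀, ·)` on a tight edge by the
indicator of a set closed under going down compares its sizes in the two 1-balls; for `s ∈ S₁`
this makes adjacency a perfect matching between the vertices of `S₁` outside `B₁(s)` and the
children of `s` in `S₂`. If `x₂` had a third parent `u` not adjacent to `x₁`, the matching at `x₁`
would have two partners for `x₂`. Conversely, for `u ∈ S₁` adjacent to `x₁`, comparing
`S_{d(x₁,·)}(u)` with `S_{d(x₀,·)}(u)` shows that `u` has at least as many children in common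
with `x₁` as neighbours in `S₁ \ B₁(x₁)`, so the matching restricts to the neighbourhood of `u`;
applied to `x̄₁` and its partner `x₂`, this gives `u ~ x₂`.
-/

open SimpleGraph (dist_eq_one_iff_adj)

structure IsBMSharp (G : SimpleGraph V) [Fintype V] (D L : ℕ) : Prop where
  connected : G.Connected
  degree_pos : 0 < D
  L_pos : 0 < L
  regular : G.IsRegularOfDegree D
  sharp : BMSharp G D L

/-- The support `B₁(a)` of `mu G D a`. -/
noncomputable def closedNbhd (G : SimpleGraph V) [Fintype V] (a : V) : Finset V :=
  {v | G.dist a v ≤ 1}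

noncomputable def nbhdSum (G : SimpleGraph V) [Fintype V] (g : V → ℝ) (a : V) : ℝ :=
  ∑ v ∈ closedNbhd G a, g v

/-- `(D + 1)` times the bound `W₁(μ_a, μ_b) ≤ 1 - 2D / ((D + 1) L)` that `κ ≥ 2 / L` forces across
an edge. -/
noncomputable def slope (D L : ℕ) : ℝ :=
  D + 1 - 2 * D / L

/-- For `x₀ ~ s`, `farNbrs G x₀ s` is the set of children of `s` in `S₂(x₀)` and `farNbrs G s x₀`
is `S₁(x₀) \ B₁(s)`. -/
noncomputable def farNbrs (G : SimpleGraph V) [Fintype V] (a b : V) : Finset V :=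
  {v ∈ G.neighborFinset b | G.dist a v = 2}

section Graph

variable {G : SimpleGraph V} {a b c : V}

lemma dist_le_dist_add_one_of_adj (h : G.Adj b c) : G.dist a c ≤ G.dist a b + 1 := by
  rcases h.diff_dist_adj (u := a) with h | h | h <;> omega

lemma dist_sub_dist_le_one_of_adj (a : V) (h : G.Adj b c) :
    (G.dist a c : ℝ) - G.dist a b ≤ 1 := by
  have := dist_le_dist_add_one_of_adj (a := a) h
  rw [sub_le_iff_le_add']
  exact_mod_cast this

lemma lipschitz_of_adj (hconn : G.Connected) {g : V → ℝ}
    (hg : ∀ c d, G.Adj c d → g d - g c ≤ 1) (u v : V) : g v - g u ≤ G.dist u v := by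
  obtain ⟨w, hw⟩ := hconn.exists_walk_length_eq_dist u v
  rw [← hw]
  clear hw
  induction w with
  | nil => simp
  | cons h w ih =>
    rw [SimpleGraph.Walk.length_cons, Nat.cast_succ]
    linarith [hg _ _ h]

lemma exists_adj_dist_eq (hconn : G.Connected) {k : ℕ} (h : G.dist a c = k + 1) :
    ∃ b, G.Adj b c ∧ G.dist a b = k := by
  obtain ⟨w, hw⟩ := hconn.exists_walk_length_eq_dist c a
  rw [G.dist_comm, h] at hw
  cases w with
  | nil => simp at hw
  | cons hcb w =>
    refine ⟨_, hcb.symm, le_antisymm ?_ ?_⟩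
    · rw [SimpleGraph.Walk.length_cons] at hw
      rw [G.dist_comm]
      exact (SimpleGraph.dist_le w).trans (by omega)
    · have := dist_le_dist_add_one_of_adj (a := a) hcb.symm
      omega

end Graph

section Neighbourhoods

variable [Fintype V] {G : SimpleGraph V} {D : ℕ} {a b c v : V}

lemma closedNbhd_eq_insert (hconn : G.Connected) (a : V) :
    closedNbhd G a = insert a (G.neighborFinset a) := by
  ext v
  rw [closedNbhd, mem_filter, mem_insert, SimpleGraph.mem_neighborFinset,
    ← dist_eq_one_iff_adj, eq_comm, ← hconn.dist_eq_zero_iff]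
  simp only [mem_univ, true_and]
  omega

lemma mem_closedNbhd : v ∈ closedNbhd G a ↔ G.dist a v ≤ 1 := by
  simp [closedNbhd]

lemma self_mem_closedNbhd (a : V) : a ∈ closedNbhd G a := by
  simp [mem_closedNbhd]

lemma mem_closedNbhd_of_adj (h : G.Adj a v) : v ∈ closedNbhd G a := by
  rw [mem_closedNbhd, dist_eq_one_iff_adj.2 h]

lemma adj_of_mem_closedNbhd (hconn : G.Connected) (hv : v ∈ closedNbhd G a) (hne : v ≠ a) :
    G.Adj a v := by
  rw [← dist_eq_one_iff_adj]
  have := hconn.dist_eq_zero_iff.not.2 (Ne.symm hne)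
  have := mem_closedNbhd.1 hv
  omega

lemma card_closedNbhd (hconn : G.Connected) (hreg : G.IsRegularOfDegree D) (a : V) :
    #(closedNbhd G a) = D + 1 := by
  rw [closedNbhd_eq_insert hconn, card_insert_of_notMem (by simp), G.card_neighborFinset_eq_degree,
    hreg a]

lemma nbhdSum_eq (hconn : G.Connected) (g : V → ℝ) (a : V) :
    nbhdSum G g a = g a + ∑ v ∈ G.neighborFinset a, g v := by
  rw [nbhdSum, closedNbhd_eq_insert hconn, sum_insert (by simp)]

lemma nbhdSum_dist_self (hconn : G.Connected) (hreg : G.IsRegularOfDegree D) (a : V) :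
    nbhdSum G (fun v => (G.dist a v : ℝ)) a = D := by
  rw [nbhdSum_eq hconn, SimpleGraph.dist_self, Nat.cast_zero, zero_add,
    sum_congr rfl fun v hv => by
      rw [dist_eq_one_iff_adj.2 ((G.mem_neighborFinset a v).1 hv), Nat.cast_one],
    sum_const, G.card_neighborFinset_eq_degree, hreg a, nsmul_one]

lemma nbhdSum_add (f g : V → ℝ) (a : V) :
    nbhdSum G (fun v => f v + g v) a = nbhdSum G f a + nbhdSum G g a :=
  sum_add_distrib

lemma eq_of_nbhdSum_eq (hconn : G.Connected) (hreg : G.IsRegularOfDegree D) {f : V → ℝ} {m : ℝ}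
    (hf : ∀ v, m ≤ f v) (hsum : nbhdSum G f a = (D + 1) * m) : ∀ v ∈ closedNbhd G a, f v = m := by
  intro v hv
  refine (((sum_eq_sum_iff_of_le fun v _ => hf v).1 ?_) v hv).symm
  rw [show ∑ i ∈ closedNbhd G a, f i = nbhdSum G f a from rfl, hsum, sum_const,
    card_closedNbhd hconn hreg, nsmul_eq_mul]
  push_cast
  ring

end Neighbourhoods

section Transport

variable [Fintype V] {G : SimpleGraph V} {D L : ℕ} {a b : V}

lemma sum_mul_mu (g : V → ℝ) (a : V) : ∑ v, g v * mu G D a v = nbhdSum G g a / (D + 1) := by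
  simp only [mu, nbhdSum, closedNbhd, sum_filter, sum_div, mul_ite, mul_zero, mul_one_div, ite_div,
    zero_div]

lemma sum_mu (hconn : G.Connected) (hreg : G.IsRegularOfDegree D) (a : V) :
    ∑ v, mu G D a v = 1 := by
  have h := sum_mul_mu (G := G) (D := D) (fun _ => 1) a
  simp only [one_mul] at h
  rw [h, nbhdSum, sum_const, card_closedNbhd hconn hreg, nsmul_one]
  push_cast
  exact div_self (by positivity)

lemma sum_mul_sub_sum_mul_le_cost {g μ ν : V → ℝ} {π : V → V → ℝ}
    (hg : ∀ u v, g v - g u ≤ G.dist u v) (hπ : ∀ u v, 0 ≤ π u v)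
    (hμ : ∀ u, ∑ v, π u v = μ u) (hν : ∀ v, ∑ u, π u v = ν v) :
    ∑ v, g v * ν v - ∑ u, g u * μ u ≤ ∑ u, ∑ v, (G.dist u v : ℝ) * π u v := by
  calc ∑ v, g v * ν v - ∑ u, g u * μ u = ∑ u, ∑ v, (g v - g u) * π u v := by
        simp only [← hμ, ← hν, mul_sum, sub_mul, sum_sub_distrib]
        rw [sum_comm]
    _ ≤ _ := sum_le_sum fun u _ => sum_le_sum fun v _ =>
        mul_le_mul_of_nonneg_right (hg u v) (hπ u v)

lemma nbhdSum_sub_le_W1 (hconn : G.Connected) (hreg : G.IsRegularOfDegree D) {g : V → ℝ}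
    (hg : ∀ u v, g v - g u ≤ G.dist u v) (a b : V) :
    (nbhdSum G g b - nbhdSum G g a) / (D + 1) ≤ W1 G D a b := by
  have hmu : ∀ c v, 0 ≤ mu G D c v := fun c v => by unfold mu; positivity
  refine le_csInf ⟨_, fun u v => mu G D a u * mu G D b v, fun u v => mul_nonneg (hmu a u) (hmu b v),
    fun u => by rw [← mul_sum, sum_mu hconn hreg, mul_one],
    fun v => by rw [← sum_mul, sum_mu hconn hreg, one_mul], rfl⟩ ?_
  rintro c ⟨π, hπ, hμ, hν, rfl⟩
  rw [sub_div, ← sum_mul_mu, ← sum_mul_mu]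
  exact sum_mul_sub_sum_mul_le_cost hg hπ hμ hν

lemma IsBMSharp.two_div_le_kappa (hG : IsBMSharp G D L) (hab : G.Adj a b) :
    2 / (L : ℝ) ≤ kappa G D a b := by
  have hpos : (0 : ℝ) < 2 / L := div_pos two_pos (Nat.cast_pos.2 hG.L_pos)
  have hbdd : BddBelow {k : ℝ | ∃ x y, G.Adj x y ∧ k = kappa G D x y} := by
    by_contra h
    have := hG.sharp
    rw [BMSharp, Real.sInf_of_not_bddBelow h] at this
    exact hpos.ne' this.symm
  exact hG.sharp ▸ csInf_le hbdd ⟨a, b, hab, rfl⟩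

lemma IsBMSharp.mul_W1_le (hG : IsBMSharp G D L) (hab : G.Adj a b) :
    (D + 1) * W1 G D a b ≤ slope D L := by
  have hD : (D : ℝ) ≠ 0 := Nat.cast_ne_zero.2 hG.degree_pos.ne'
  have hk : (D : ℝ) * kappa G D a b = (D + 1) * (1 - W1 G D a b) := by
    unfold kappa
    field_simp
  have := mul_le_mul_of_nonneg_left (hG.two_div_le_kappa hab) (Nat.cast_nonneg D)
  rw [hk, ← mul_div_assoc, mul_comm (D : ℝ) 2] at this
  rw [slope]
  linarith

lemma IsBMSharp.nbhdSum_sub_le_of_adj (hG : IsBMSharp G D L) {g : V → ℝ}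
    (hg : ∀ c d, G.Adj c d → g d - g c ≤ 1) (hab : G.Adj a b) :
    nbhdSum G g b - nbhdSum G g a ≤ slope D L := by
  have h := nbhdSum_sub_le_W1 hG.connected hG.regular (lipschitz_of_adj hG.connected hg) a b
  have hD : (0 : ℝ) < D + 1 := by positivity
  rw [div_le_iff₀ hD, mul_comm] at h
  exact h.trans (hG.mul_W1_le hab)

lemma IsBMSharp.nbhdSum_sub_le (hG : IsBMSharp G D L) {g : V → ℝ}
    (hg : ∀ c d, G.Adj c d → g d - g c ≤ 1) (a b : V) :
    nbhdSum G g b - nbhdSum G g a ≤ G.dist a b * slope D L := by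
  obtain ⟨w, hw⟩ := hG.connected.exists_walk_length_eq_dist a b
  rw [← hw]
  clear hw
  induction w with
  | nil => simp
  | cons h w ih =>
    rw [SimpleGraph.Walk.length_cons, Nat.cast_succ]
    linarith [hG.nbhdSum_sub_le_of_adj hg h]

end Transport

section Pole

variable [Fintype V] {G : SimpleGraph V} {D L : ℕ} {x0 p a b u v : V}

lemma mul_slope (hL : L ≠ 0) (D : ℕ) : (L : ℝ) * slope D L = L * (D + 1) - 2 * D := by
  rw [slope]
  field_simp

lemma IsBMSharp.nbhdSum_dist_sub_eq (hG : IsBMSharp G D L) (hab : G.dist a b = L) :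
    nbhdSum G (fun v => (G.dist a v : ℝ)) b - nbhdSum G (fun v => (G.dist a v : ℝ)) a =
      L * slope D L := by
  have hle := hG.nbhdSum_sub_le (fun _ _ => dist_sub_dist_le_one_of_adj a) a b
  rw [hab] at hle
  refine le_antisymm hle ?_
  have hfar : ∀ v ∈ G.neighborFinset b, (L : ℝ) - 1 ≤ G.dist a v := fun v hv => by
    have := dist_le_dist_add_one_of_adj (a := a) ((G.mem_neighborFinset b v).1 hv).symm
    rw [hab] at this
    rw [sub_le_iff_le_add]
    exact_mod_cast this
  have hsum := sum_le_sum hfar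
  rw [sum_const, G.card_neighborFinset_eq_degree, hG.regular b, nsmul_eq_mul] at hsum
  rw [nbhdSum_eq hG.connected, hab, nbhdSum_dist_self hG.connected hG.regular,
    mul_slope hG.L_pos.ne']
  linarith

lemma IsBMSharp.nbhdSum_sub_eq_of_geodesic (hG : IsBMSharp G D L) {g : V → ℝ}
    (hg : ∀ c d, G.Adj c d → g d - g c ≤ 1)
    (htot : nbhdSum G g b - nbhdSum G g a = G.dist a b * slope D L) (huv : G.Adj u v)
    (hgeo : G.dist a u + 1 + G.dist v b = G.dist a b) :
    nbhdSum G g v - nbhdSum G g u = slope D L := by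
  refine le_antisymm (hG.nbhdSum_sub_le_of_adj hg huv) ?_
  have hau := hG.nbhdSum_sub_le hg a u
  have hvb := hG.nbhdSum_sub_le hg v b
  have hsplit : (G.dist a b : ℝ) * slope D L =
      G.dist a u * slope D L + slope D L + G.dist v b * slope D L := by
    rw [← hgeo]
    push_cast
    ring
  linarith

lemma IsBMSharp.nbhdSum_dist_add_dist_eq_of_geodesic (hG : IsBMSharp G D L)
    (hp : G.dist x0 p = L) (huv : G.Adj u v) (hgeo : G.dist x0 u + 1 + G.dist v p = L) :
    nbhdSum G (fun w => (G.dist x0 w + G.dist p w : ℝ)) v =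
      nbhdSum G (fun w => (G.dist x0 w + G.dist p w : ℝ)) u := by
  have hpx0 : G.dist p x0 = L := G.dist_comm.trans hp
  have hx0 := hG.nbhdSum_sub_eq_of_geodesic (fun _ _ => dist_sub_dist_le_one_of_adj x0)
    (by rw [hp]; exact hG.nbhdSum_dist_sub_eq hp) huv (by rw [hp]; exact hgeo)
  have hp := hG.nbhdSum_sub_eq_of_geodesic (fun _ _ => dist_sub_dist_le_one_of_adj p)
    (by rw [hpx0]; exact hG.nbhdSum_dist_sub_eq hpx0) huv.symm
    (by rw [hpx0, G.dist_comm (u := p), G.dist_comm (u := u)]; omega)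
  rw [nbhdSum_add, nbhdSum_add]
  linarith

theorem IsBMSharp.dist_add_dist_eq (hG : IsBMSharp G D L) (hp : G.dist x0 p = L) (v : V) :
    G.dist x0 v + G.dist v p = L := by
  set φ : V → ℝ := fun w => G.dist x0 w + G.dist p w
  have hφ : ∀ w, (L : ℝ) ≤ φ w := fun w => by
    have := hG.connected.dist_triangle (u := x0) (v := w) (w := p)
    rw [hp, G.dist_comm (u := w)] at this
    show (L : ℝ) ≤ G.dist x0 w + G.dist p w
    exact_mod_cast this
  have hφL : ∀ w, φ w = L → G.dist x0 w + G.dist w p = L := fun w hw => by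
    have hw' : (G.dist x0 w : ℝ) + G.dist p w = L := hw
    rw [G.dist_comm (u := w)]
    exact_mod_cast hw'
  have hx0 : nbhdSum G φ x0 = (D + 1) * L := by
    have := hG.nbhdSum_dist_sub_eq (G.dist_comm.trans hp)
    rw [nbhdSum_dist_self hG.connected hG.regular, mul_slope hG.L_pos.ne'] at this
    rw [nbhdSum_add, nbhdSum_dist_self hG.connected hG.regular]
    linarith
  have hlevel : ∀ k w, G.dist x0 w = k → nbhdSum G φ w = (D + 1) * L := by
    intro k
    induction k with
    | zero => intro w hw; rwa [← hG.connected.dist_eq_zero_iff.1 hw]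
    | succ k ih =>
      intro w hw
      obtain ⟨u, huw, hu⟩ := exists_adj_dist_eq hG.connected hw
      have hw := hφL w (eq_of_nbhdSum_eq hG.connected hG.regular hφ (ih u hu) w
        (mem_closedNbhd_of_adj huw))
      rw [hG.nbhdSum_dist_add_dist_eq_of_geodesic hp huw (by omega), ih u hu]
  exact hφL v (eq_of_nbhdSum_eq hG.connected hG.regular hφ (hlevel _ v rfl) v
    (self_mem_closedNbhd v))

lemma IsBMSharp.nbhdSum_dist_sub_eq_of_adj (hG : IsBMSharp G D L) (hp : G.dist x0 p = L)
    (huv : G.Adj u v) (hlev : G.dist x0 v = G.dist x0 u + 1) :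
    nbhdSum G (fun w => (G.dist x0 w : ℝ)) v - nbhdSum G (fun w => (G.dist x0 w : ℝ)) u =
      slope D L :=
  hG.nbhdSum_sub_eq_of_geodesic (fun _ _ => dist_sub_dist_le_one_of_adj x0)
    (by rw [hp]; exact hG.nbhdSum_dist_sub_eq hp) huv
    (by rw [hp, ← hlev]; exact hG.dist_add_dist_eq hp v)

lemma IsBMSharp.card_inter_le_of_adj (hG : IsBMSharp G D L) (hp : G.dist x0 p = L)
    {Z : Finset V} (hZ : ∀ c d, G.Adj c d → G.dist x0 d = G.dist x0 c + 1 → d ∈ Z → c ∈ Z)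
    (huv : G.Adj u v) (hlev : G.dist x0 v = G.dist x0 u + 1) :
    #(closedNbhd G v ∩ Z) ≤ #(closedNbhd G u ∩ Z) := by
  set g : V → ℝ := fun w => (G.dist x0 w : ℝ) + if w ∈ Z then 1 else 0
  have hg : ∀ c d, G.Adj c d → g d - g c ≤ 1 := by
    intro c d hcd
    by_cases hup : G.dist x0 d = G.dist x0 c + 1
    · have := hZ c d hcd hup
      simp only [g, hup]
      push_cast
      split_ifs <;> simp_all
    · have : (G.dist x0 d : ℝ) ≤ G.dist x0 c := by
        have := dist_le_dist_add_one_of_adj (a := x0) hcd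
        exact_mod_cast (by omega : G.dist x0 d ≤ G.dist x0 c)
      simp only [g]
      split_ifs <;> linarith
  have hsum : ∀ w, nbhdSum G g w =
      nbhdSum G (fun w => (G.dist x0 w : ℝ)) w + #(closedNbhd G w ∩ Z) := fun w => by
    rw [nbhdSum_add, nbhdSum, nbhdSum, sum_boole, filter_mem_eq_inter]
  have := hG.nbhdSum_sub_le_of_adj hg huv
  rw [hsum, hsum, ← hG.nbhdSum_dist_sub_eq_of_adj hp huv hlev] at this
  exact_mod_cast (by linarith : (#(closedNbhd G v ∩ Z) : ℝ) ≤ #(closedNbhd G u ∩ Z))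

end Pole

lemma card_bipartite_eq_one {α β : Type*} {s : Finset α} {t : Finset β} (r : α → β → Prop)
    [∀ a b, Decidable (r a b)] (hts : #t ≤ #s) (hs : ∀ a ∈ s, ∃ b ∈ t, r a b)
    (ht : ∀ b ∈ t, #(s.bipartiteBelow r b) ≤ 1) :
    (∀ a ∈ s, #(t.bipartiteAbove r a) = 1) ∧ ∀ b ∈ t, #(s.bipartiteBelow r b) = 1 := by
  have habove : ∀ a ∈ s, 1 ≤ #(t.bipartiteAbove r a) := fun a ha => by
    obtain ⟨b, hb, hab⟩ := hs a ha
    exact card_pos.2 ⟨b, (mem_bipartiteAbove _).2 ⟨hb, hab⟩⟩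
  have hdc := sum_card_bipartiteAbove_eq_sum_card_bipartiteBelow r (s := s) (t := t)
  have hle_t := sum_le_sum ht
  have hle_s := sum_le_sum habove
  simp only [sum_const, smul_eq_mul, mul_one] at hle_t hle_s
  refine ⟨fun a ha => ((sum_eq_sum_iff_of_le habove).1 ?_ a ha).symm,
    fun b hb => (sum_eq_sum_iff_of_le ht).1 ?_ b hb⟩ <;>
  · rw [sum_const, smul_eq_mul, mul_one]
    omega

section FarNeighbours

variable [Fintype V] {G : SimpleGraph V} {D L : ℕ} {x0 p s s' t u v y y' a b : V}

lemma mem_farNbrs : v ∈ farNbrs G a b ↔ G.Adj b v ∧ G.dist a v = 2 := by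
  simp [farNbrs]

lemma mem_farNbrs_iff_of_adj (hconn : G.Connected) (hs : G.Adj x0 s) (ht : G.Adj x0 t) :
    t ∈ farNbrs G s x0 ↔ t ≠ s ∧ ¬ G.Adj s t := by
  have hle := hconn.dist_triangle (u := s) (v := x0) (w := t)
  rw [dist_eq_one_iff_adj.2 hs.symm, dist_eq_one_iff_adj.2 ht] at hle
  rw [mem_farNbrs]
  simp only [ht, true_and]
  rw [← dist_eq_one_iff_adj, ne_comm, Ne, ← hconn.dist_eq_zero_iff]
  omega

lemma tri_comm (G : SimpleGraph V) (a b : V) : tri G a b = tri G b a := by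
  simp only [tri, and_comm]

lemma card_farNbrs_add_tri (hconn : G.Connected) (hreg : G.IsRegularOfDegree D)
    (hab : G.Adj a b) : #(farNbrs G a b) + tri G a b + 1 = D := by
  have hmaps : Set.MapsTo (G.dist a) (G.neighborFinset b) (range 3) := fun v hv => by
    have := dist_le_dist_add_one_of_adj (a := a) ((G.mem_neighborFinset b v).1 hv)
    rw [dist_eq_one_iff_adj.2 hab] at this
    simp only [coe_range, Set.mem_Iio]
    omega
  have h := card_eq_sum_card_fiberwise hmaps
  rw [G.card_neighborFinset_eq_degree, hreg b] at h
  simp only [sum_range_succ, sum_range_zero, zero_add] at h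
  have h0 : {v ∈ G.neighborFinset b | G.dist a v = 0} = {a} := by
    ext v
    simp only [mem_filter, mem_singleton, SimpleGraph.mem_neighborFinset, hconn.dist_eq_zero_iff]
    constructor
    · rintro ⟨-, rfl⟩
      rfl
    · rintro rfl
      exact ⟨hab.symm, rfl⟩
  have h1 : {v ∈ G.neighborFinset b | G.dist a v = 1} =
      ({v | G.Adj a v ∧ G.Adj b v} : Finset V) := by
    ext v
    simp [and_comm]
  rw [h0, h1, card_singleton] at h
  rw [farNbrs, tri]
  omega

lemma card_farNbrs_comm (hconn : G.Connected) (hreg : G.IsRegularOfDegree D) (hab : G.Adj a b) :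
    #(farNbrs G a b) = #(farNbrs G b a) := by
  have := card_farNbrs_add_tri hconn hreg hab
  have := card_farNbrs_add_tri hconn hreg hab.symm
  rw [tri_comm] at this
  omega

lemma mem_farNbrs_and_adj_of_dist_lt (hconn : G.Connected) (hs : G.Adj x0 s)
    (hst : G.dist s t = 2) (hy : y ∈ closedNbhd G s) (hty : G.dist t y < G.dist x0 y) :
    y ∈ farNbrs G x0 s ∧ G.Adj t y := by
  have hsy := mem_closedNbhd.1 hy
  have hx0y := hconn.dist_triangle (u := x0) (v := s) (w := y)
  rw [dist_eq_one_iff_adj.2 hs] at hx0y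
  have hty0 : G.dist t y ≠ 0 := fun h => by
    rw [← hconn.dist_eq_zero_iff.1 h] at hsy
    omega
  have hsy0 : G.dist s y ≠ 0 := fun h => by
    rw [← hconn.dist_eq_zero_iff.1 h, dist_eq_one_iff_adj.2 hs, G.dist_comm, hst] at hty
    omega
  refine ⟨mem_farNbrs.2 ⟨?_, by omega⟩, ?_⟩ <;> rw [← dist_eq_one_iff_adj] <;> omega

lemma IsBMSharp.eq_of_adj_child (hG : IsBMSharp G D L) (hp : G.dist x0 p = L) (hs : G.Adj x0 s)
    (hy : y ∈ farNbrs G x0 s) (ht : t ∈ farNbrs G s x0) (hs' : s' ∈ farNbrs G s x0)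
    (hty : G.Adj t y) (hs'y : G.Adj s' y) : t = s' := by
  set Z := insert x0 (farNbrs G s x0)
  have hZ : ∀ c d, G.Adj c d → G.dist x0 d = G.dist x0 c + 1 → d ∈ Z → c ∈ Z := by
    intro c d _ hlev hd
    rcases mem_insert.1 hd with rfl | hd
    · simp at hlev
    · rw [dist_eq_one_iff_adj.2 (mem_farNbrs.1 hd).1] at hlev
      exact mem_insert.2 (Or.inl (hG.connected.dist_eq_zero_iff.1 (by omega)).symm)
  have hcard := hG.card_inter_le_of_adj hp hZ (mem_farNbrs.1 hy).1
    (by rw [(mem_farNbrs.1 hy).2, dist_eq_one_iff_adj.2 hs])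
  have hsub : closedNbhd G s ∩ Z ⊆ {x0} := by
    intro v hv
    rcases mem_insert.1 (mem_inter.1 hv).2 with rfl | hv'
    · exact mem_singleton_self _
    · have := mem_closedNbhd.1 (mem_inter.1 hv).1
      have := (mem_farNbrs.1 hv').2
      omega
  have hle := (hcard.trans (card_le_card hsub)).trans (card_singleton x0).le
  have hmem : ∀ w ∈ farNbrs G s x0, G.Adj w y → w ∈ closedNbhd G y ∩ Z := fun w hw hwy =>
    mem_inter.2 ⟨mem_closedNbhd_of_adj hwy.symm, mem_insert_of_mem hw⟩
  exact card_le_one.1 hle t (hmem t ht hty) s' (hmem s' hs' hs'y)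

lemma IsBMSharp.exists_child_adj (hG : IsBMSharp G D L) (hp : G.dist x0 p = L) (hs : G.Adj x0 s)
    (ht : t ∈ farNbrs G s x0) : ∃ y ∈ farNbrs G x0 s, G.Adj t y := by
  have hconn := hG.connected
  obtain ⟨hx0t, hst⟩ := mem_farNbrs.1 ht
  set Z : Finset V := {v | G.dist x0 v ≤ G.dist t v}
  have hZ : ∀ c d, G.Adj c d → G.dist x0 d = G.dist x0 c + 1 → d ∈ Z → c ∈ Z := by
    intro c d hcd hlev hd
    have := dist_le_dist_add_one_of_adj (a := t) hcd
    simp only [Z, mem_filter, mem_univ, true_and] at hd ⊢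
    omega
  have hcard := hG.card_inter_le_of_adj hp hZ hs
    (by rw [SimpleGraph.dist_self, dist_eq_one_iff_adj.2 hs])
  have hlt : #(closedNbhd G x0 ∩ Z) < #(closedNbhd G s) := by
    rw [card_closedNbhd hconn hG.regular, ← card_closedNbhd hconn hG.regular x0]
    refine card_lt_card ((ssubset_iff_of_subset inter_subset_left).2
      ⟨t, mem_closedNbhd_of_adj hx0t, fun h => ?_⟩)
    have := (mem_filter.1 (mem_inter.1 h).2).2
    rw [SimpleGraph.dist_self, dist_eq_one_iff_adj.2 hx0t] at this
    omega
  obtain ⟨y, hys, hyZ⟩ : ∃ y ∈ closedNbhd G s, y ∉ Z := by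
    by_contra! h
    rw [inter_eq_left.2 h] at hcard
    omega
  simp only [Z, mem_filter, mem_univ, true_and, not_le] at hyZ
  exact ⟨y, mem_farNbrs_and_adj_of_dist_lt hG.connected hs hst hys hyZ⟩

lemma IsBMSharp.farNbrs_matching (hG : IsBMSharp G D L) (hp : G.dist x0 p = L)
    (hs : G.Adj x0 s) :
    (∀ t ∈ farNbrs G s x0, #((farNbrs G x0 s).bipartiteAbove G.Adj t) = 1) ∧
      ∀ y ∈ farNbrs G x0 s, #((farNbrs G s x0).bipartiteBelow G.Adj y) = 1 :=
  card_bipartite_eq_one G.Adj (card_farNbrs_comm hG.connected hG.regular hs).le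
    (fun _ ht => hG.exists_child_adj hp hs ht)
    fun _ hy => card_le_one.2 fun _ ht _ ht' => hG.eq_of_adj_child hp hs hy
      ((mem_bipartiteBelow _).1 ht).1 ((mem_bipartiteBelow _).1 ht').1
      ((mem_bipartiteBelow _).1 ht).2 ((mem_bipartiteBelow _).1 ht').2

lemma IsBMSharp.exists_far_adj (hG : IsBMSharp G D L) (hp : G.dist x0 p = L) (hs : G.Adj x0 s)
    (hy : y ∈ farNbrs G x0 s) : ∃ t ∈ farNbrs G s x0, G.Adj t y := by
  obtain ⟨t, ht⟩ := card_pos.1 ((hG.farNbrs_matching hp hs).2 y hy).ge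
  exact ⟨t, (mem_bipartiteBelow _).1 ht⟩

lemma IsBMSharp.child_eq_of_adj (hG : IsBMSharp G D L) (hp : G.dist x0 p = L) (hs : G.Adj x0 s)
    (ht : t ∈ farNbrs G s x0) (hy : y ∈ farNbrs G x0 s) (hy' : y' ∈ farNbrs G x0 s)
    (hty : G.Adj t y) (hty' : G.Adj t y') : y = y' :=
  card_le_one.1 ((hG.farNbrs_matching hp hs).1 t ht).le y ((mem_bipartiteAbove _).2 ⟨hy, hty⟩)
    y' ((mem_bipartiteAbove _).2 ⟨hy', hty'⟩)

lemma IsBMSharp.adj_of_common_child (hG : IsBMSharp G D L) (hp : G.dist x0 p = L)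
    (hs : G.Adj x0 s) (hs' : s' ∈ farNbrs G s x0) (hu : G.Adj x0 u) (hsy : G.Adj s y)
    (hy : G.dist x0 y = 2) (hs'y : G.Adj s' y) (huy : G.Adj u y) (hus : u ≠ s) (hus' : u ≠ s') :
    G.Adj s u := by
  by_contra h
  exact hus' (hG.eq_of_adj_child hp hs (mem_farNbrs.2 ⟨hsy, hy⟩)
    ((mem_farNbrs_iff_of_adj hG.connected hs hu).2 ⟨hus, h⟩) hs' huy hs'y)

lemma IsBMSharp.nbhdSum_dist_le (hG : IsBMSharp G D L) (hp : G.dist x0 p = L) (hu : G.Adj x0 u)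
    (hsu : G.Adj s u) :
    nbhdSum G (fun v => (G.dist s v : ℝ)) u ≤ nbhdSum G (fun v => (G.dist x0 v : ℝ)) u := by
  have hs := hG.nbhdSum_sub_le_of_adj (fun _ _ => dist_sub_dist_le_one_of_adj s) hsu
  have hx0 := hG.nbhdSum_dist_sub_eq_of_adj hp hu
    (by rw [SimpleGraph.dist_self, dist_eq_one_iff_adj.2 hu])
  rw [nbhdSum_dist_self hG.connected hG.regular] at hs hx0
  linarith

lemma nbhdSum_dist_add_card (hconn : G.Connected) (hs : G.Adj x0 s) (hu : G.Adj x0 u)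
    (hsu : G.Adj s u) :
    nbhdSum G (fun v => (G.dist s v : ℝ)) u + #(closedNbhd G u ∩ farNbrs G x0 s) =
      nbhdSum G (fun v => (G.dist x0 v : ℝ)) u + #(closedNbhd G u ∩ farNbrs G s x0) := by
  have key : ∀ v ∈ closedNbhd G u,
      G.dist s v + (if s = v then 1 else 0) + (if v ∈ farNbrs G x0 s then 1 else 0) =
        G.dist x0 v + (if x0 = v then 1 else 0) + (if v ∈ farNbrs G s x0 then 1 else 0) := by
    intro v hv
    have huv := mem_closedNbhd.1 hv
    have h1 := hconn.dist_triangle (u := x0) (v := u) (w := v)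
    have h2 := hconn.dist_triangle (u := s) (v := u) (w := v)
    have h3 := hconn.dist_triangle (u := x0) (v := s) (w := v)
    have h4 := hconn.dist_triangle (u := s) (v := x0) (w := v)
    rw [dist_eq_one_iff_adj.2 hu] at h1
    rw [dist_eq_one_iff_adj.2 hsu] at h2
    rw [dist_eq_one_iff_adj.2 hs] at h3
    rw [dist_eq_one_iff_adj.2 hs.symm] at h4
    simp only [mem_farNbrs, ← dist_eq_one_iff_adj, ← hconn.dist_eq_zero_iff]
    split_ifs <;> omega
  have hsum := sum_congr rfl key
  simp only [sum_add_distrib, sum_ite_eq, sum_boole, if_pos (mem_closedNbhd_of_adj hsu.symm),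
    if_pos (mem_closedNbhd_of_adj hu.symm), filter_mem_eq_inter, Nat.cast_id] at hsum
  simp only [nbhdSum]
  exact_mod_cast (by omega : ∑ v ∈ closedNbhd G u, G.dist s v + #(closedNbhd G u ∩ farNbrs G x0 s) =
    ∑ v ∈ closedNbhd G u, G.dist x0 v + #(closedNbhd G u ∩ farNbrs G s x0))

lemma IsBMSharp.card_inter_farNbrs_le (hG : IsBMSharp G D L) (hp : G.dist x0 p = L)
    (hs : G.Adj x0 s) (hu : G.Adj x0 u) (hsu : G.Adj s u) :
    #(closedNbhd G u ∩ farNbrs G s x0) ≤ #(closedNbhd G u ∩ farNbrs G x0 s) := by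
  have := nbhdSum_dist_add_card hG.connected hs hu hsu
  have := hG.nbhdSum_dist_le hp hu hsu
  exact_mod_cast (by linarith :
    (#(closedNbhd G u ∩ farNbrs G s x0) : ℝ) ≤ #(closedNbhd G u ∩ farNbrs G x0 s))

lemma IsBMSharp.exists_child_adj_adj (hG : IsBMSharp G D L) (hp : G.dist x0 p = L)
    (hs : G.Adj x0 s) (hu : G.Adj x0 u) (hsu : G.Adj s u) (ht : t ∈ farNbrs G s x0)
    (hut : G.Adj u t) : ∃ y ∈ farNbrs G x0 s, G.Adj u y ∧ G.Adj t y := by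
  have hconn := hG.connected
  have hadj : ∀ y ∈ closedNbhd G u ∩ farNbrs G x0 s, G.Adj u y := fun y hy => by
    obtain ⟨hyu, hy⟩ := mem_inter.1 hy
    refine adj_of_mem_closedNbhd hconn hyu fun h => ?_
    have := (mem_farNbrs.1 (h ▸ hy)).2
    rw [dist_eq_one_iff_adj.2 hu] at this
    omega
  set F := closedNbhd G u ∩ farNbrs G s x0
  set C := closedNbhd G u ∩ farNbrs G x0 s
  -- The matching partner of each `y ∈ C` lies in `F`, so `#C ≤ #F ≤ #C` leaves no `t ∈ F` without
  -- a partner in `C`.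
  have hCF : #C ≤ #{t ∈ F | ∃ y ∈ C, G.Adj t y} := by
    refine card_le_card_of_forall_subsingleton (fun y t => G.Adj t y) (fun y hyC => ?_)
      fun t' ht' y hy y' hy' => ?_
    · have hy := (mem_inter.1 hyC).2
      obtain ⟨t', ht', ht'y⟩ := hG.exists_far_adj hp hs hy
      have hx0t' := (mem_farNbrs.1 ht').1
      obtain ⟨ht's, hst'⟩ := (mem_farNbrs_iff_of_adj hconn hs hx0t').1 ht'
      have hsfar := (mem_farNbrs_iff_of_adj hconn hx0t' hs).2 ⟨ht's.symm, fun h => hst' h.symm⟩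
      have ht'u := hG.adj_of_common_child hp hx0t' hsfar hu ht'y (mem_farNbrs.1 hy).2
        (mem_farNbrs.1 hy).1 (hadj y hyC) (fun h => hst' (h ▸ hsu)) (G.ne_of_adj hsu).symm
      exact ⟨t', mem_filter.2 ⟨mem_inter.2 ⟨mem_closedNbhd_of_adj ht'u.symm, ht'⟩, y, hyC, ht'y⟩,
        ht'y⟩
    · exact hG.child_eq_of_adj hp hs (mem_inter.1 (mem_filter.1 ht').1).2
        (mem_inter.1 (mem_coe.1 hy.1)).2 (mem_inter.1 (mem_coe.1 hy'.1)).2 hy.2 hy'.2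
  have hF : {t ∈ F | ∃ y ∈ C, G.Adj t y} = F := eq_of_subset_of_card_le (filter_subset _ _)
    ((hG.card_inter_farNbrs_le hp hs hu hsu).trans hCF)
  have htF : t ∈ {t ∈ F | ∃ y ∈ C, G.Adj t y} := by
    rw [hF]
    exact mem_inter.2 ⟨mem_closedNbhd_of_adj hut, ht⟩
  obtain ⟨-, y, hyC, hty⟩ := mem_filter.1 htF
  exact ⟨y, (mem_inter.1 hyC).2, hadj y hyC, hty⟩

end FarNeighbours

theorem stmt_general [Fintype V] (G : SimpleGraph V) (hconn : G.Connected)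
    (D L : ℕ) (hD : 0 < D) (hL : 0 < L) (hreg : G.IsRegularOfDegree D)
    (hBM : BMSharp G D L)
    (x0 : V) (hpole : ∃ p, G.dist x0 p = L)
    (x1 xb1 x2 : V) (hx1 : G.dist x0 x1 = 1) (hxb1 : G.dist x0 xb1 = 1)
    (hx2 : G.dist x0 x2 = 2) (h12 : G.Adj x1 x2) (hb12 : G.Adj xb1 x2)
    (hne : x1 ≠ xb1) (hnadj : ¬ G.Adj x1 xb1)
    (u : V) (hu : G.dist x0 u = 1) (hu1 : u ≠ x1) (hub1 : u ≠ xb1) :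
    (G.dist x0 u + G.dist u x2 = G.dist x0 x2) ↔ (G.Adj u x1 ∧ G.Adj u xb1) := by
  obtain ⟨p, hp⟩ := hpole
  have hG : IsBMSharp G D L := ⟨hconn, hD, hL, hreg, hBM⟩
  rw [hu, hx2, show 1 + G.dist u x2 = 2 ↔ G.dist u x2 = 1 by omega, dist_eq_one_iff_adj]
  rw [dist_eq_one_iff_adj] at hx1 hxb1 hu
  have hfar : xb1 ∈ farNbrs G x1 x0 := (mem_farNbrs_iff_of_adj hconn hx1 hxb1).2 ⟨hne.symm, hnadj⟩
  have hfar' : x1 ∈ farNbrs G xb1 x0 :=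
    (mem_farNbrs_iff_of_adj hconn hxb1 hx1).2 ⟨hne, fun h => hnadj h.symm⟩
  constructor
  · intro hux2
    exact ⟨(hG.adj_of_common_child hp hx1 hfar hu h12 hx2 hb12 hux2 hu1 hub1).symm,
      (hG.adj_of_common_child hp hxb1 hfar' hu hb12 hx2 h12 hux2 hub1 hu1).symm⟩
  · rintro ⟨hux1, huxb1⟩
    obtain ⟨y, hy, huy, hxb1y⟩ := hG.exists_child_adj_adj hp hx1 hu hux1.symm hfar huxb1
    rwa [hG.child_eq_of_adj hp hx1 hfar hy (mem_farNbrs.2 ⟨h12, hx2⟩) hxb1y hb12] at huy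

theorem stmt [Fintype V] (G : SimpleGraph V) (hconn : G.Connected)
    (D L : ℕ) (hD : 0 < D) (hL : 0 < L) (hreg : G.IsRegularOfDegree D)
    (hdiam : G.diam = L) (hBM : BMSharp G D L)
    (x0 : V) (hpole : ∃ p, G.dist x0 p = L)
    (x1 xb1 x2 : V) (hx1 : G.dist x0 x1 = 1) (hxb1 : G.dist x0 xb1 = 1)
    (hx2 : G.dist x0 x2 = 2) (h12 : G.Adj x1 x2) (hb12 : G.Adj xb1 x2)
    (hne : x1 ≠ xb1) (hnadj : ¬ G.Adj x1 xb1)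
    (u : V) (hu : G.dist x0 u = 1) (hu1 : u ≠ x1) (hub1 : u ≠ xb1) :
    (G.dist x0 u + G.dist u x2 = G.dist x0 x2) ↔ (G.Adj u x1 ∧ G.Adj u xb1) :=
  stmt_general G hconn D L hD hL hreg hBM x0 hpole x1 xb1 x2 hx1 hxb1 hx2 h12 hb12 hne hnadj u hu
    hu1 hub1

end BMS
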